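/- Let t ≥ 2 and m ≥ 1 be integers, and let λ be a (t, mt+1)-core partition with distinct parts. Then β(λ) ⊆ {1, 2, …, mt−1}; in particular, n_i(λ) ≤ m for every 1 ≤ i ≤ t−1, and n_i(λ)·n_{i+1}(λ) = 0 for every 1 ≤ i ≤ t−2. -/

import Mathlib

/-- A partition: a finite weakly decreasing list of positive integers. -/
structure Partn where
  parts : List ℕ
  pos : ∀ p ∈ parts, 0 < p
  sorted : parts.Pairwise (· ≥ ·)

namespace Partn

/-- The size of a partition: the sum of its parts. -/
def size (l : Partn) : ℕ := l.parts.sum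

/-- The number of rows `k` (0-indexed) with `λ_k ≥ j` (the length of column `j`). -/
def colLen (l : Partn) (j : ℕ) : ℕ := (l.parts.filter (fun p => j ≤ p)).length

/-- The hook length of the box in row `i` (0-indexed) and column `j` (1-indexed):
`λ_i − j + #{k : λ_k ≥ j} − i + 1` (with 1-indexed rows). -/
def hook (l : Partn) (i j : ℕ) : ℕ :=
  (l.parts.getD i 0 - j) + (l.colLen j - (i + 1)) + 1

/-- A partition is a `t`-core if none of its hook lengths is divisible by `t`. -/
def IsCore (t : ℕ) (l : Partn) : Prop :=
  ∀ i j : ℕ, i < l.parts.length → 1 ≤ j → j ≤ l.parts.getD i 0 → ¬ (t ∣ l.hook i j)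

/-- A partition has distinct parts if its parts are strictly decreasing. -/
def DistinctParts (l : Partn) : Prop := l.parts.Pairwise (· > ·)

/-- The β-set of a partition: `{λ_i + ℓ − i : 1 ≤ i ≤ ℓ}` (1-indexed). -/
def betaSet (l : Partn) : Finset ℕ :=
  (Finset.range l.parts.length).image
    (fun i => l.parts.getD i 0 + (l.parts.length - 1 - i))

/-- `nFn t i l` is the number of elements of the β-set of `l` congruent to `i` mod `t`. -/
def nFn (t i : ℕ) (l : Partn) : ℕ :=
  (l.betaSet.filter (fun x => x % t = i)).card

end Partn


/-!
An `s`-core has a β-set closed under `x ↦ x - s` (as long as `x ≥ s`): a number `v < β_i` missing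
from the β-set gives a box in row `i` of hook length `β_i - v`. Hence the β-set of a `t`-core
contains `x % t` for each of its elements `x`, which is nonzero since `0` is never in a β-set. If
`x ≥ mt` were in the β-set of a `(t, mt+1)`-core, then `x ≠ mt`, and both `x - mt` and
`x - mt - 1` would lie in it; but distinct parts mean the β-set has no two consecutive elements.
The same observation applied to the residues `i` and `i + 1` gives `n_i n_{i+1} = 0`.
-/

theorem List.le_getD_iff_lt_length_filter {L : List ℕ} (hL : L.Pairwise (· ≥ ·)) (j : ℕ)
    {k : ℕ} (hk : k < L.length) :
    j ≤ L.getD k 0 ↔ k < (L.filter (j ≤ ·)).length := by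
  induction L generalizing k with
  | nil => simp at hk
  | cons a L ih =>
    obtain ⟨ha, hL⟩ := List.pairwise_cons.mp hL
    by_cases hja : j ≤ a
    · cases k with
      | zero => simp [List.filter_cons_of_pos, hja]
      | succ k =>
        simp only [List.filter_cons_of_pos (p := (j ≤ ·)) (by simpa using hja),
          List.getD_cons_succ, List.length_cons]
        rw [ih hL (by simpa using hk)]
        omega
    · have hnil : L.filter (j ≤ ·) = [] :=
        List.filter_eq_nil_iff.mpr fun p hp => by have := ha p hp; simp only [decide_eq_true_eq]; omega
      rw [List.filter_cons_of_neg (by simpa using hja), hnil]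
      cases k with
      | zero => simpa using hja
      | succ k =>
        have hk : k < L.length := by simpa using hk
        have := ha _ (List.getElem_mem hk)
        simp only [List.getD_cons_succ, List.getD_eq_getElem L 0 hk, List.length_nil]
        omega

theorem Finset.lt_card_filter_range_iff {n : ℕ} (p : ℕ → Prop) [DecidablePred p]
    (hp : ∀ k k', k ≤ k' → k' < n → p k' → p k) {k : ℕ} (hk : k < n) :
    p k ↔ k < ((Finset.range n).filter p).card := by
  constructor
  · intro hpk
    have hsub : Finset.range (k + 1) ⊆ (Finset.range n).filter p := fun x hx => by
      simp only [Finset.mem_range, Finset.mem_filter] at hx ⊢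
      exact ⟨by omega, hp x k (by omega) hk hpk⟩
    simpa using Finset.card_le_card hsub
  · intro hc
    by_contra hpk
    have hsub : (Finset.range n).filter p ⊆ Finset.range k := fun x hx => by
      simp only [Finset.mem_range, Finset.mem_filter] at hx ⊢
      by_contra hxk
      exact hpk (hp k x (by omega) hx.1 hx.2)
    have := Finset.card_le_card hsub
    simp only [Finset.card_range] at this
    omega

theorem Finset.card_filter_mod_eq_le {S : Finset ℕ} {m t : ℕ} (hS : ∀ x ∈ S, x < m * t)
    (i : ℕ) : (S.filter (· % t = i)).card ≤ m := by
  calc (S.filter (· % t = i)).card ≤ (Finset.range m).card := by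
        refine Finset.card_le_card_of_injOn (· / t) (fun x hx => ?_) (fun a ha b hb hab => ?_)
        · simp only [Finset.coe_filter, Set.mem_ofPred_eq] at hx
          simpa using Nat.div_lt_of_lt_mul (by rw [Nat.mul_comm]; exact hS x hx.1)
        · simp only [Finset.coe_filter, Set.mem_ofPred_eq] at ha hb
          rw [← Nat.mod_add_div a t, ← Nat.mod_add_div b t, ha.2, hb.2]
          exact congrArg (i + t * ·) hab
    _ = m := Finset.card_range m

namespace Partn

variable {l : Partn}

/-- The element `β_k` of the β-set, with `k` 0-indexed. -/
def beta (l : Partn) (k : ℕ) : ℕ := l.parts.getD k 0 + (l.parts.length - 1 - k)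

theorem mem_betaSet {x : ℕ} : x ∈ l.betaSet ↔ ∃ k < l.parts.length, l.beta k = x := by
  simp [betaSet, beta]

theorem getD_pos {k : ℕ} (hk : k < l.parts.length) : 0 < l.parts.getD k 0 := by
  rw [List.getD_eq_getElem _ _ hk]
  exact l.pos _ (List.getElem_mem hk)

theorem getD_le_getD {k k' : ℕ} (hkk : k ≤ k') (hk' : k' < l.parts.length) :
    l.parts.getD k' 0 ≤ l.parts.getD k 0 := by
  rcases hkk.eq_or_lt with rfl | hlt
  · exact le_rfl
  rw [List.getD_eq_getElem _ _ hk', List.getD_eq_getElem _ _ (hlt.trans hk')]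
  exact List.pairwise_iff_getElem.mp l.sorted _ _ _ _ hlt

theorem DistinctParts.getD_lt_getD (hd : l.DistinctParts) {k k' : ℕ} (hkk : k < k')
    (hk' : k' < l.parts.length) : l.parts.getD k' 0 < l.parts.getD k 0 := by
  rw [List.getD_eq_getElem _ _ hk', List.getD_eq_getElem _ _ (hkk.trans hk')]
  exact List.pairwise_iff_getElem.mp hd _ _ _ _ hkk

theorem beta_le_beta {k k' : ℕ} (hkk : k ≤ k') (hk' : k' < l.parts.length) :
    l.beta k' ≤ l.beta k := by
  have := getD_le_getD hkk hk'
  unfold beta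
  omega

theorem pos_of_mem_betaSet {x : ℕ} (hx : x ∈ l.betaSet) : 0 < x := by
  obtain ⟨k, hk, rfl⟩ := mem_betaSet.mp hx
  have := getD_pos hk
  unfold beta
  omega

theorem DistinctParts.succ_notMem_betaSet (hd : l.DistinctParts) {v : ℕ}
    (hv : v ∈ l.betaSet) : v + 1 ∉ l.betaSet := by
  rintro hv1
  obtain ⟨k', hk', hb'⟩ := mem_betaSet.mp hv
  obtain ⟨k, hk, hb⟩ := mem_betaSet.mp hv1
  unfold beta at hb hb'
  rcases lt_trichotomy k k' with h | rfl | h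
  · have := hd.getD_lt_getD h hk'
    omega
  · omega
  · have := hd.getD_lt_getD h hk
    omega

theorem le_getD_iff_lt_colLen {j k : ℕ} (hk : k < l.parts.length) :
    j ≤ l.parts.getD k 0 ↔ k < l.colLen j :=
  List.le_getD_iff_lt_length_filter l.sorted j hk

theorem colLen_eq_of_le_getD_iff {j c : ℕ} (hc : c ≤ l.parts.length)
    (h : ∀ k < l.parts.length, j ≤ l.parts.getD k 0 ↔ k < c) : l.colLen j = c := by
  have hle : l.colLen j ≤ l.parts.length := List.length_filter_le _ _
  have hiff : ∀ k < l.parts.length, k < l.colLen j ↔ k < c := fun k hk =>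
    (le_getD_iff_lt_colLen hk).symm.trans (h k hk)
  rcases lt_trichotomy (l.colLen j) c with hlt | heq | hgt
  · exact absurd ((hiff _ (by omega)).mpr hlt) (lt_irrefl _)
  · exact heq
  · exact absurd ((hiff c (by omega)).mp hgt) (lt_irrefl _)

theorem exists_hook_eq_beta_sub {i v : ℕ} (hi : i < l.parts.length) (hvi : v < l.beta i)
    (hv : v ∉ l.betaSet) :
    ∃ j, 1 ≤ j ∧ j ≤ l.parts.getD i 0 ∧ l.hook i j = l.beta i - v := by
  set n := l.parts.length
  -- the hook sought lies in column `j := v + 1 + c - n`, which meets exactly the `c` rows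
  -- whose β-number exceeds `v`
  set c := ((Finset.range n).filter (v < l.beta ·)).card
  have hc : ∀ k < n, v < l.beta k ↔ k < c := fun k hk =>
    Finset.lt_card_filter_range_iff (fun k => v < l.beta k)
      (fun _ _ hkk hk' h => h.trans_le (beta_le_beta hkk hk')) hk
  have hic : i < c := (hc i hi).mp hvi
  have hcn : c ≤ n := by simpa using Finset.card_filter_le (Finset.range n) (v < l.beta ·)
  have hbeta_c : c < n → l.beta c < v := fun hcn => by
    have hle : ¬ v < l.beta c := (hc c hcn).not.mpr (lt_irrefl c)
    have hne : l.beta c ≠ v := fun h => hv (mem_betaSet.mpr ⟨c, hcn, h⟩)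
    omega
  have hncv : n - c ≤ v := by
    rcases hcn.eq_or_lt with h | h
    · omega
    · have := hbeta_c h
      unfold beta at this
      omega
  set j := v + 1 + c - n
  have hcol : ∀ k < n, j ≤ l.parts.getD k 0 ↔ k < c := fun k hk => by
    constructor
    · intro hjk
      by_contra hkc
      have hc_lt := hbeta_c (by omega)
      have hk_le := getD_le_getD (l := l) (not_lt.mp hkc) hk
      unfold beta at hc_lt
      omega
    · intro hkc
      have hc_gt := (hc (c - 1) (by omega)).mpr (by omega)
      have hk_ge := getD_le_getD (l := l) (show k ≤ c - 1 by omega) (by omega)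
      unfold beta at hc_gt
      omega
  have hcolLen : l.colLen j = c := colLen_eq_of_le_getD_iff hcn hcol
  have hji : j ≤ l.parts.getD i 0 := (hcol i hi).mpr hic
  refine ⟨j, by omega, hji, ?_⟩
  unfold hook beta
  rw [hcolLen]
  omega

theorem IsCore.sub_mem_betaSet {s : ℕ} (hcore : l.IsCore s) {x : ℕ} (hx : x ∈ l.betaSet)
    (hsx : s ≤ x) : x - s ∈ l.betaSet := by
  by_contra hv
  obtain ⟨i, hi, rfl⟩ := mem_betaSet.mp hx
  have hs : 0 < s := Nat.pos_of_ne_zero fun h => hv (by simpa [h] using hx)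
  obtain ⟨j, hj1, hji, hhook⟩ := exists_hook_eq_beta_sub hi (by omega) hv
  exact hcore i j hi hj1 hji ⟨1, by omega⟩

theorem IsCore.sub_mul_mem_betaSet {t : ℕ} (hcore : l.IsCore t) {x : ℕ} (hx : x ∈ l.betaSet) :
    ∀ k, k * t ≤ x → x - k * t ∈ l.betaSet
  | 0, _ => by simpa using hx
  | k + 1, hk => by
    rw [Nat.succ_mul] at hk ⊢
    rw [← Nat.sub_sub]
    exact hcore.sub_mem_betaSet (hcore.sub_mul_mem_betaSet hx k (by omega)) (by omega)

theorem IsCore.mod_mem_betaSet {t : ℕ} (hcore : l.IsCore t) {x : ℕ} (hx : x ∈ l.betaSet) :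
    x % t ∈ l.betaSet := by
  rw [Nat.mod_eq_sub_div_mul]
  exact hcore.sub_mul_mem_betaSet hx _ (Nat.div_mul_le_self x t)

theorem IsCore.mem_betaSet_of_nFn_ne_zero {t i : ℕ} (hcore : l.IsCore t) (h : l.nFn t i ≠ 0) :
    i ∈ l.betaSet := by
  obtain ⟨x, hx⟩ := Finset.card_ne_zero.mp h
  rw [Finset.mem_filter] at hx
  exact hx.2 ▸ hcore.mod_mem_betaSet hx.1

end Partn

theorem betaSet_subset_t_mt_add_one_general (t m : ℕ) (lam : Partn)
    (hlam : (lam.IsCore t ∧ lam.IsCore (m * t + 1) ∧ lam.DistinctParts)) :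
    lam.betaSet ⊆ Finset.Icc 1 (m * t - 1) ∧
      (∀ i : ℕ, 1 ≤ i → i ≤ t - 1 → Partn.nFn t i lam ≤ m) ∧
      ∀ i : ℕ, 1 ≤ i → i ≤ t - 2 → Partn.nFn t i lam * Partn.nFn t (i + 1) lam = 0 := by
  obtain ⟨htcore, hmtcore, hdist⟩ := hlam
  have hlt : ∀ x ∈ lam.betaSet, x < m * t := fun x hx => by
    by_contra! hmx
    have hmod := Partn.pos_of_mem_betaSet (htcore.mod_mem_betaSet hx)
    have hne : x ≠ m * t := by rintro rfl; simp at hmod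
    have hlow := hmtcore.sub_mem_betaSet hx (by omega)
    have hhigh := htcore.sub_mul_mem_betaSet hx m hmx
    rw [← show x - (m * t + 1) + 1 = x - m * t by omega] at hhigh
    exact hdist.succ_notMem_betaSet hlow hhigh
  refine ⟨fun x hx => ?_, fun i _ _ => Finset.card_filter_mod_eq_le hlt i, fun i _ _ => ?_⟩
  · have := Partn.pos_of_mem_betaSet hx
    have := hlt x hx
    exact Finset.mem_Icc.mpr ⟨by omega, by omega⟩
  · by_contra h
    obtain ⟨hi, hi1⟩ := mul_ne_zero_iff.mp h
    exact hdist.succ_notMem_betaSet (htcore.mem_betaSet_of_nFn_ne_zero hi)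
      (htcore.mem_betaSet_of_nFn_ne_zero hi1)

/-- The β-set of a `(t, mt+1)`-core partition with distinct parts lies in `{1, …, mt−1}`. -/
theorem betaSet_subset_t_mt_add_one (t m : ℕ) (ht : 2 ≤ t) (hm : 1 ≤ m) (lam : Partn)
    (hlam : (lam.IsCore t ∧ lam.IsCore (m * t + 1) ∧ lam.DistinctParts)) :
    lam.betaSet ⊆ Finset.Icc 1 (m * t - 1) ∧
      (∀ i : ℕ, 1 ≤ i → i ≤ t - 1 → Partn.nFn t i lam ≤ m) ∧
      ∀ i : ℕ, 1 ≤ i → i ≤ t - 2 → Partn.nFn t i lam * Partn.nFn t (i + 1) lam = 0 :=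
  betaSet_subset_t_mt_add_one_general t m lam hlam
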